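/- For two weight vectors w₁, w₂ in the simplex Δ^{K-1} and bounded reward functions r_k with |r_k(y)| ≤ R for all k, y, the Gibbs policies π_{w₁}, π_{w₂} (with common π_ref and β > 0) satisfy the total variation bound: ‖π_{w₁} - π_{w₂}‖_TV ≤ (R/β) ‖w₁ - w₂‖₁. -/

import Mathlib

lemma key_ineq (x : ℝ) (hx : 0 ≤ x) : (1 - x) * Real.exp (2*x) ≤ 1 + x := by
  have hF : ∀ t : ℝ, HasDerivAt (fun s : ℝ => (1+s)*Real.exp (-2*s) - (1-s))
      (1 - (1+2*t)*Real.exp (-2*t)) t := by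
    intro t
    have hin : HasDerivAt (fun s : ℝ => -2*s) (-2) t := by
      simpa using (hasDerivAt_id t).const_mul (-2)
    have he : HasDerivAt (fun s : ℝ => Real.exp (-2*s)) (Real.exp (-2*t) * -2) t := hin.exp
    have h1 : HasDerivAt (fun s : ℝ => (1+s)*Real.exp (-2*s))
        (1 * Real.exp (-2*t) + (1+t) * (Real.exp (-2*t) * -2)) t :=
      ((hasDerivAt_id t).const_add 1).mul he
    have h2 : HasDerivAt (fun s : ℝ => (1:ℝ)-s) (-1) t := by
      exact (hasDerivAt_id t).const_sub 1
    refine (h1.sub h2).congr_deriv ?_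
    ring
  have hmono : Monotone (fun s : ℝ => (1+s)*Real.exp (-2*s) - (1-s)) := by
    apply monotone_of_deriv_nonneg
    · exact fun t => (hF t).differentiableAt
    · intro t
      rw [(hF t).deriv]
      have h := Real.add_one_le_exp (2*t)
      have hp : (0:ℝ) < Real.exp (-2*t) := Real.exp_pos _
      have : (1+2*t) * Real.exp (-2*t) ≤ 1 := by
        rw [show (-2*t : ℝ) = -(2*t) by ring, Real.exp_neg]
        rw [mul_inv_le_iff₀ (Real.exp_pos _), one_mul]
        linarith
      linarith
  have h0 := hmono hx
  simp only at h0
  have h0' : 0 ≤ (1+x)*Real.exp (-2*x) - (1-x) := by simpa using h0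
  have hp : (0:ℝ) < Real.exp (2*x) := Real.exp_pos _
  have hme : Real.exp (-2*x) * Real.exp (2*x) = 1 := by
    rw [← Real.exp_add]; norm_num
  nlinarith [h0', hp, hme]

/-- For weight vectors `w₁, w₂` in the simplex and rewards bounded by `R`, the Gibbs
policies satisfy the total variation bound `‖π_{w₁} - π_{w₂}‖_TV ≤ (R/β) ‖w₁ - w₂‖₁`. -/
theorem stmt_15 {Y : Type*} [Fintype Y] [Nonempty Y] (K : ℕ)
    (πref : Y → ℝ) (href : ∀ y, 0 < πref y) (hrefsum : ∑ y, πref y = 1)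
    (rk : Fin K → Y → ℝ) (R : ℝ) (hR : ∀ k y, |rk k y| ≤ R)
    (β : ℝ) (hβ : 0 < β)
    (w₁ w₂ : Fin K → ℝ) (hw₁ : w₁ ∈ stdSimplex ℝ (Fin K)) (hw₂ : w₂ ∈ stdSimplex ℝ (Fin K))
    (Z₁ Z₂ : ℝ)
    (hZ₁ : Z₁ = ∑ y, πref y * Real.exp ((∑ k, w₁ k * rk k y) / β))
    (hZ₂ : Z₂ = ∑ y, πref y * Real.exp ((∑ k, w₂ k * rk k y) / β))
    (π₁ π₂ : Y → ℝ)
    (hπ₁ : ∀ y, π₁ y = πref y * Real.exp ((∑ k, w₁ k * rk k y) / β) / Z₁)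
    (hπ₂ : ∀ y, π₂ y = πref y * Real.exp ((∑ k, w₂ k * rk k y) / β) / Z₂) :
    (1 / 2) * ∑ y, |π₁ y - π₂ y| ≤ (R / β) * ∑ k, |w₁ k - w₂ k| := by
  set f : Y → ℝ := fun y => (∑ k, w₁ k * rk k y) / β with hf
  set g : Y → ℝ := fun y => (∑ k, w₂ k * rk k y) / β with hg
  set D : ℝ := (R / β) * ∑ k, |w₁ k - w₂ k| with hDdef
  -- bound on |f - g|
  have hD : ∀ y, |f y - g y| ≤ D := by
    intro y
    have : f y - g y = (∑ k, (w₁ k - w₂ k) * rk k y) / β := by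
      simp only [hf, hg]
      rw [div_sub_div_same, ← Finset.sum_sub_distrib]
      congr 1; apply Finset.sum_congr rfl; intro k _; ring
    rw [this, abs_div, abs_of_pos hβ]
    rw [div_le_iff₀ hβ, hDdef]
    have h1 : |∑ k, (w₁ k - w₂ k) * rk k y| ≤ ∑ k, |w₁ k - w₂ k| * R := by
      refine (Finset.abs_sum_le_sum_abs _ _).trans ?_
      apply Finset.sum_le_sum
      intro k _
      rw [abs_mul]
      exact mul_le_mul_of_nonneg_left (hR k y) (abs_nonneg _)
    calc |∑ k, (w₁ k - w₂ k) * rk k y| ≤ ∑ k, |w₁ k - w₂ k| * R := h1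
      _ = R / β * (∑ k, |w₁ k - w₂ k|) * β := by
        rw [← Finset.sum_mul]; field_simp
  have hD0 : 0 ≤ D := le_trans (abs_nonneg _) (hD (Classical.arbitrary Y))
  -- positivity of Z
  have hZ₁pos : 0 < Z₁ := by
    rw [hZ₁]
    exact Finset.sum_pos (fun y _ => mul_pos (href y) (Real.exp_pos _)) Finset.univ_nonempty
  have hZ₂pos : 0 < Z₂ := by
    rw [hZ₂]
    exact Finset.sum_pos (fun y _ => mul_pos (href y) (Real.exp_pos _)) Finset.univ_nonempty
  have hπ₂pos : ∀ y, 0 < π₂ y := fun y => by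
    rw [hπ₂ y]; exact div_pos (mul_pos (href y) (Real.exp_pos _)) hZ₂pos
  have hsum₁ : ∑ y, π₁ y = 1 := by
    rw [Finset.sum_congr rfl (fun y _ => hπ₁ y), ← Finset.sum_div, ← hZ₁,
      div_self hZ₁pos.ne']
  have hsum₂ : ∑ y, π₂ y = 1 := by
    rw [Finset.sum_congr rfl (fun y _ => hπ₂ y), ← Finset.sum_div, ← hZ₂,
      div_self hZ₂pos.ne']
  set c : ℝ := Z₂ / Z₁ with hc
  have hratio : ∀ y, π₁ y = π₂ y * (c * Real.exp (f y - g y)) := by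
    intro y
    rw [hπ₁ y, hπ₂ y, hc]
    have : Real.exp (f y) = Real.exp (g y) * Real.exp (f y - g y) := by
      rw [← Real.exp_add]; ring_nf
    simp only [hf, hg] at this ⊢
    rw [this]
    field_simp
  set u : ℝ := c * Real.exp D with hu
  set v : ℝ := c * Real.exp (-D) with hv
  have hcpos : 0 < c := div_pos hZ₂pos hZ₁pos
  have hupos : 0 < u := mul_pos hcpos (Real.exp_pos _)
  have hvpos : 0 < v := mul_pos hcpos (Real.exp_pos _)
  have huv : u = Real.exp (2*D) * v := by
    rw [hu, hv, show Real.exp D = Real.exp (2*D) * Real.exp (-D) by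
      rw [← Real.exp_add]; ring_nf]
    ring
  have hpoint : ∀ y, v ≤ c * Real.exp (f y - g y) ∧ c * Real.exp (f y - g y) ≤ u := by
    intro y
    have h := abs_le.mp (hD y)
    constructor
    · exact mul_le_mul_of_nonneg_left (Real.exp_le_exp.mpr h.1) hcpos.le
    · exact mul_le_mul_of_nonneg_left (Real.exp_le_exp.mpr h.2) hcpos.le
  -- v ≤ 1 ≤ u
  have hv1 : v ≤ 1 := by
    calc v = ∑ y, π₂ y * v := by rw [← Finset.sum_mul, hsum₂, one_mul]
      _ ≤ ∑ y, π₁ y := by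
        apply Finset.sum_le_sum
        intro y _
        rw [hratio y]
        exact mul_le_mul_of_nonneg_left (hpoint y).1 (hπ₂pos y).le
      _ = 1 := hsum₁
  have hu1 : 1 ≤ u := by
    calc (1:ℝ) = ∑ y, π₁ y := hsum₁.symm
      _ ≤ ∑ y, π₂ y * u := by
        apply Finset.sum_le_sum
        intro y _
        rw [hratio y]
        exact mul_le_mul_of_nonneg_left (hpoint y).2 (hπ₂pos y).le
      _ = u := by rw [← Finset.sum_mul, hsum₂, one_mul]
  -- two TV bounds
  have hdiffsum : ∑ y, (π₁ y - π₂ y) = 0 := by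
    rw [Finset.sum_sub_distrib, hsum₁, hsum₂, sub_self]
  have habs : ∀ t : ℝ, |t| = 2 * max t 0 - t := by
    intro t
    rcases le_or_gt 0 t with h | h
    · rw [abs_of_nonneg h, max_eq_left h]; ring
    · rw [abs_of_neg h, max_eq_right h.le]; ring
  have habs' : ∀ t : ℝ, |t| = 2 * max (-t) 0 + t := by
    intro t; rw [← abs_neg t, habs (-t)]; ring
  have hA : ∑ y, |π₁ y - π₂ y| ≤ 2 * (u - 1) := by
    calc ∑ y, |π₁ y - π₂ y| = ∑ y, (2 * max (π₁ y - π₂ y) 0 - (π₁ y - π₂ y)) := by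
          exact Finset.sum_congr rfl fun y _ => habs _
      _ = 2 * ∑ y, max (π₁ y - π₂ y) 0 := by
          rw [Finset.sum_sub_distrib, hdiffsum, sub_zero, Finset.mul_sum]
      _ ≤ 2 * ∑ y, π₂ y * (u - 1) := by
          apply mul_le_mul_of_nonneg_left _ (by norm_num)
          apply Finset.sum_le_sum
          intro y _
          apply max_le
          · rw [hratio y]
            have := (hpoint y).2
            nlinarith [(hπ₂pos y).le]
          · exact mul_nonneg (hπ₂pos y).le (by linarith)
      _ = 2 * (u - 1) := by rw [← Finset.sum_mul, hsum₂, one_mul]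
  have hB : ∑ y, |π₁ y - π₂ y| ≤ 2 * (1 - v) := by
    calc ∑ y, |π₁ y - π₂ y| = ∑ y, (2 * max (π₂ y - π₁ y) 0 + (π₁ y - π₂ y)) := by
          refine Finset.sum_congr rfl fun y _ => ?_
          rw [habs' (π₁ y - π₂ y)]; ring_nf
      _ = 2 * ∑ y, max (π₂ y - π₁ y) 0 := by
          rw [Finset.sum_add_distrib, hdiffsum, add_zero, Finset.mul_sum]
      _ ≤ 2 * ∑ y, π₂ y * (1 - v) := by
          apply mul_le_mul_of_nonneg_left _ (by norm_num)
          apply Finset.sum_le_sum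
          intro y _
          apply max_le
          · rw [hratio y]
            have := (hpoint y).1
            nlinarith [(hπ₂pos y).le]
          · exact mul_nonneg (hπ₂pos y).le (by linarith)
      _ = 2 * (1 - v) := by rw [← Finset.sum_mul, hsum₂, one_mul]
  -- conclude
  have hkey := key_ineq D hD0
  have hE : (0:ℝ) < Real.exp (2*D) := Real.exp_pos _
  rcases le_or_gt (u - 1) (1 - v) with hcase | hcase
  · -- u + v ≤ 2, u = E v
    have h2 : u * (1 + (Real.exp (2*D))⁻¹) ≤ 2 := by
      have hvu : v = (Real.exp (2*D))⁻¹ * u := by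
        rw [huv]; field_simp
      nlinarith [hvu, hcase]
    have hmul : (Real.exp (2*D))⁻¹ * Real.exp (2*D) = 1 := inv_mul_cancel₀ hE.ne'
    have huD : u ≤ 1 + D := by nlinarith [hE, inv_pos.mpr hE]
    linarith [hA]
  · have h3 : 2 < u + v := by linarith
    have h4 : u + v = v * (1 + Real.exp (2*D)) := by rw [huv]; ring
    have hvD : 1 - D ≤ v := by
      by_contra hvd
      push_neg at hvd
      have h5 : v * (1 + Real.exp (2*D)) < (1-D) * (1 + Real.exp (2*D)) :=
        mul_lt_mul_of_pos_right hvd (by positivity)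
      have h6 : (1-D) * (1 + Real.exp (2*D)) = (1-D) + (1-D) * Real.exp (2*D) := by ring
      linarith
    linarith [hB]
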